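/- Let N ≥ 1 and let H : ℝ → M_N(ℂ) be continuously differentiable with H(t) invertible for every t. Let A : ℝ → M_N(ℂ) be differentiable with A(0) = Id and A'(t) = −(1/2) A(t) H'(t) H(t)⁻¹ for all t. If g ∈ M_N(ℂ) satisfies g H(t) = H(t) g for all t ∈ ℝ, then g A(t) = A(t) g for all t ∈ ℝ. -/

import Mathlib

/-!
Write `B t = -(1/2) H'(t) H(t)⁻¹`, so that `A' = A B`. Differentiating `g H = H g` shows that `g`
commutes with `H'`, and `g` commutes with `H⁻¹`, hence with `B`. Then `g A` and `A g` both solve the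
linear equation `X' = X B` with the same value `g` at `0`. Since `B` is continuous, `X ↦ X B(t)` is
Lipschitz uniformly for `t` in compact intervals, so Grönwall uniqueness gives `g A = A g`.
-/

open Matrix Set

section NormedRing

variable {R : Type*} [NormedRing R]

theorem lipschitzWith_mul_right (b : R) : LipschitzWith ‖b‖₊ (· * b) :=
  LipschitzWith.of_dist_le_mul fun x y => by
    rw [dist_eq_norm, dist_eq_norm, ← sub_mul, coe_nnnorm, mul_comm ‖b‖]
    exact norm_mul_le (x - y) b

theorem HasDerivAt.commute_of_forall [NormedAlgebra ℝ R] {f : ℝ → R} {f' a : R} {t : ℝ}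
    (hf : HasDerivAt f f' t) (h : ∀ s, Commute a (f s)) : Commute a f' :=
  (hf.const_mul a).unique <| by simpa only [(h _).eq] using hf.mul_const a

theorem linear_ODE_solution_unique [NormedSpace ℝ R] {B f₁ f₂ : ℝ → R} {t₀ : ℝ}
    (hB : Continuous B) (hf₁ : ∀ t, HasDerivAt f₁ (f₁ t * B t) t)
    (hf₂ : ∀ t, HasDerivAt f₂ (f₂ t * B t) t) (h : f₁ t₀ = f₂ t₀) : f₁ = f₂ := by
  ext t
  obtain ⟨a, b, ht, ht₀⟩ : ∃ a b, t ∈ Ioo a b ∧ t₀ ∈ Ioo a b :=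
    ⟨min t t₀ - 1, max t t₀ + 1, by grind, by grind⟩
  obtain ⟨C, hC⟩ := isCompact_Icc.exists_bound_of_continuousOn (hB.continuousOn (s := Icc a b))
  have hlip : ∀ s ∈ Ioo a b, LipschitzOnWith C.toNNReal (· * B s) univ := fun s hs =>
    ((lipschitzWith_mul_right (B s)).weaken <| NNReal.coe_le_coe.1 <|
      (hC s (Ioo_subset_Icc_self hs)).trans (Real.le_coe_toNNReal C)).lipschitzOnWith
  exact ODE_solution_unique_of_mem_Ioo hlip ht₀ (fun s _ => ⟨hf₁ s, trivial⟩)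
    (fun s _ => ⟨hf₂ s, trivial⟩) h ht

end NormedRing

section Matrix

theorem Continuous.matrix_inv_of_isUnit {X n R : Type*} [TopologicalSpace X] [Fintype n]
    [DecidableEq n] [NormedCommRing R] [HasSummableGeomSeries R] {f : X → Matrix n n R}
    (hf : Continuous f) (h : ∀ x, IsUnit (f x)) : Continuous fun x => (f x)⁻¹ :=
  continuous_iff_continuousAt.2 fun x =>
    (continuousAt_matrix_inv _ <| NormedRing.inverse_continuousAt
      ((f x).isUnit_iff_isUnit_det.1 (h x)).unit).comp hf.continuousAt

attribute [local instance] Matrix.linftyOpNormedAddCommGroup Matrix.linftyOpNormedSpace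
  Matrix.linftyOpNormedRing Matrix.linftyOpNormedAlgebra

theorem hasDerivAt_matrix {m n α : Type*} [Fintype m] [Fintype n] [NormedAddCommGroup α]
    [NormedSpace ℝ α] [FiniteDimensional ℝ α] {f : ℝ → Matrix m n α} {f' : Matrix m n α} {t : ℝ}
    (h : ∀ i j, HasDerivAt (fun s => f s i j) (f' i j) t) : HasDerivAt f f' t :=
  ((ofLinearEquiv ℝ : (m → n → α) ≃ₗ[ℝ] Matrix m n α).toContinuousLinearEquiv.hasFDerivAt
    |>.comp_hasDerivAt t (hasDerivAt_pi.2 fun i => hasDerivAt_pi.2 (h i)) :)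

theorem stmt_4_general (N : ℕ)
    (H H' A A' : ℝ → Matrix (Fin N) (Fin N) ℂ)
    (hHinv : ∀ t, IsUnit (H t))
    (hH : ∀ t i j, HasDerivAt (fun s => H s i j) (H' t i j) t)
    (hH'cont : ∀ i j, Continuous fun t => H' t i j)
    (hA : ∀ t i j, HasDerivAt (fun s => A s i j) (A' t i j) t)
    (hA0 : A 0 = 1)
    (hODE : ∀ t, A' t = (-(1/2) : ℂ) • (A t * H' t * (H t)⁻¹))
    (g : Matrix (Fin N) (Fin N) ℂ)
    (hg : ∀ t, g * H t = H t * g) :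
    ∀ t, g * A t = A t * g := by
  set B : ℝ → Matrix (Fin N) (Fin N) ℂ := fun t => (-(1/2) : ℂ) • (H' t * (H t)⁻¹)
  have hH_deriv (t : ℝ) : HasDerivAt H (H' t) t := hasDerivAt_matrix (hH t)
  have hA_deriv (t : ℝ) : HasDerivAt A (A t * B t) t := by
    simpa only [B, hODE, mul_smul_comm, mul_assoc] using hasDerivAt_matrix (hA t)
  have hg_inv (t : ℝ) : Commute g (H t)⁻¹ := by
    obtain ⟨u, hu⟩ := hHinv t
    rw [← hu, ← coe_units_inv]
    exact Commute.units_inv_right (hu ▸ hg t)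
  have hg_B (t : ℝ) : Commute g (B t) :=
    (((hH_deriv t).commute_of_forall hg).mul_right (hg_inv t)).smul_right _
  have hB : Continuous B :=
    ((continuous_matrix hH'cont).fun_mul
      ((continuous_iff_continuousAt.2 fun t => (hH_deriv t).continuousAt).matrix_inv_of_isUnit
        hHinv)).fun_const_smul _
  intro t
  refine congrFun (linear_ODE_solution_unique (t₀ := 0) (f₁ := (g * A ·)) (f₂ := (A · * g)) hB
    (fun s => ?_) (fun s => ?_) (by simp [hA0])) t
  · simpa only [mul_assoc] using (hA_deriv s).const_mul g
  · simpa only [mul_assoc, (hg_B s).eq] using (hA_deriv s).mul_const g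

/-- Let `H : ℝ → M_N(ℂ)` be continuously differentiable with `H t` invertible,
and let `A : ℝ → M_N(ℂ)` be differentiable with `A 0 = 1` and
`A' t = -(1/2) A t * H' t * (H t)⁻¹`. If `g` commutes with every `H t`, then `g` commutes
with every `A t`. -/
theorem stmt_4 (N : ℕ) (hN : 1 ≤ N)
    (H H' A A' : ℝ → Matrix (Fin N) (Fin N) ℂ)
    (hHinv : ∀ t, IsUnit (H t))
    (hH : ∀ t i j, HasDerivAt (fun s => H s i j) (H' t i j) t)
    (hH'cont : ∀ i j, Continuous fun t => H' t i j)
    (hA : ∀ t i j, HasDerivAt (fun s => A s i j) (A' t i j) t)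
    (hA0 : A 0 = 1)
    (hODE : ∀ t, A' t = (-(1/2) : ℂ) • (A t * H' t * (H t)⁻¹))
    (g : Matrix (Fin N) (Fin N) ℂ)
    (hg : ∀ t, g * H t = H t * g) :
    ∀ t, g * A t = A t * g :=
  stmt_4_general N H H' A A' hHinv hH hH'cont hA hA0 hODE g hg

end Matrix
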